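/- arXiv:1008.1029 — 5 statements merged into one kernel-verified Lean document; each statement's English description precedes it below -/
import Mathlib

section
/- Let A be a nonzero m×m matrix over F₂ and let G_A ≤ V(Q_A) be the gauge group of the generalized Bacon–Shor code of A, with stabilizer S_A = G_A ∩ C(G_A). Then: (i) the number of physical qubits |Q_A| equals |A|, the number of nonzero entries of A; (ii) dim C(G_A) − dim S_A = 2·rank(A), i.e. the code has k = rank(A) logical qubits; (iii) if rank(A) ≥ 1, the minimum weight of an element of C(S_A) \ G_A equals min(drow(A), dcol(A)). -/
set_option linter.unusedSectionVars false

open Finset Matrix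

abbrev F2 : Type := ZMod 2

abbrev PauliSpace (Q : Type) := Q → F2 × F2

section Pauli

variable {Q : Type} [Fintype Q] [DecidableEq Q]

/-- Support of a Pauli vector. -/
def psupp (v : PauliSpace Q) : Finset Q := Finset.univ.filter (fun q => v q ≠ (0, 0))

/-- Weight of a Pauli vector. -/
def pwt (v : PauliSpace Q) : ℕ := (psupp v).card

/-- The symplectic form. -/
def omegaF (u v : PauliSpace Q) : F2 :=
  ∑ q, ((u q).1 * (v q).2 + (u q).2 * (v q).1)

lemma omegaF_add_left (u v w : PauliSpace Q) :
    omegaF (u + v) w = omegaF u w + omegaF v w := by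
  simp only [omegaF, Pi.add_apply, Prod.fst_add, Prod.snd_add, ← Finset.sum_add_distrib]
  exact Finset.sum_congr rfl (fun q _ => by ring)

lemma omegaF_smul_left (c : F2) (u w : PauliSpace Q) :
    omegaF (c • u) w = c * omegaF u w := by
  simp only [omegaF, Pi.smul_apply, Prod.smul_fst, Prod.smul_snd, smul_eq_mul,
    Finset.mul_sum]
  exact Finset.sum_congr rfl (fun q _ => by ring)

/-- Centralizer of a subspace w.r.t. the symplectic form. -/
def pcent (G : Submodule F2 (PauliSpace Q)) : Submodule F2 (PauliSpace Q) where
  carrier := {v | ∀ g ∈ G, omegaF v g = 0}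
  zero_mem' := by
    intro g _
    simp [omegaF]
  add_mem' := by
    intro a b ha hb g hg
    rw [omegaF_add_left, ha g hg, hb g hg, add_zero]
  smul_mem' := by
    intro c a ha g hg
    rw [omegaF_smul_left, ha g hg, mul_zero]

/-- Stabilizer group of a gauge group. -/
def pstab (G : Submodule F2 (PauliSpace Q)) : Submodule F2 (PauliSpace Q) := G ⊓ pcent G

/-- Single-qubit Pauli X vector. -/
def Xop (c : Q) : PauliSpace Q := fun q => if q = c then (1, 0) else (0, 0)

/-- Single-qubit Pauli Z vector. -/
def Zop (c : Q) : PauliSpace Q := fun q => if q = c then (0, 1) else (0, 0)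

/-- The set of weights of dressed logical operators; its infimum is the distance. -/
def distSet (G : Submodule F2 (PauliSpace Q)) : Set ℕ :=
  {w | ∃ v, v ∈ pcent (pstab G) ∧ v ∉ G ∧ pwt v = w}

/-- Pauli vectors supported in `M`. -/
def PMod (M : Finset Q) : Submodule F2 (PauliSpace Q) where
  carrier := {v | ∀ q, q ∉ M → v q = 0}
  zero_mem' := by intro q _; rfl
  add_mem' := by
    intro a b ha hb q hq
    simp [Pi.add_apply, ha q hq, hb q hq]
  smul_mem' := by
    intro c a ha q hq
    simp [Pi.smul_apply, ha q hq]

/-- Projection onto the qubits in `M`. -/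
def projL (M : Finset Q) : PauliSpace Q →ₗ[F2] PauliSpace Q where
  toFun v := fun q => if q ∈ M then v q else 0
  map_add' a b := by funext q; by_cases h : q ∈ M <;> simp [h]
  map_smul' c a := by funext q; by_cases h : q ∈ M <;> simp [h]

/-- Number of independent dressed logical operators supported in `M`. -/
noncomputable def lM (G : Submodule F2 (PauliSpace Q)) (M : Finset Q) : ℕ :=
  Module.finrank F2 ↥(pcent ((pstab G).map (projL M)) ⊓ PMod M)
    - Module.finrank F2 ↥(G ⊓ PMod M)

/-- Number of independent bare logical operators supported in `M`. -/
noncomputable def lbareM (G : Submodule F2 (PauliSpace Q)) (M : Finset Q) : ℕ :=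
  Module.finrank F2 ↥(pcent (G.map (projL M)) ⊓ PMod M)
    - Module.finrank F2 ↥(pstab G ⊓ PMod M)

end Pauli

section Classical

variable {ι : Type} [Fintype ι] [DecidableEq ι]

/-- Hamming weight of a classical vector. -/
def hwt (v : ι → F2) : ℕ := (Finset.univ.filter (fun i => v i ≠ 0)).card

/-- Row space of a matrix. -/
def Crow (A : Matrix ι ι F2) : Submodule F2 (ι → F2) := Submodule.span F2 (Set.range A)

/-- Column space of a matrix. -/
def Ccol (A : Matrix ι ι F2) : Submodule F2 (ι → F2) := Submodule.span F2 (Set.range Aᵀ)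

/-- Minimum distance of the row space. -/
noncomputable def drow (A : Matrix ι ι F2) : ℕ := sInf {w | ∃ v ∈ Crow A, v ≠ 0 ∧ hwt v = w}

/-- Minimum distance of the column space. -/
noncomputable def dcol (A : Matrix ι ι F2) : ℕ := sInf {w | ∃ v ∈ Ccol A, v ≠ 0 ∧ hwt v = w}

/-- Number of nonzero entries of a matrix. -/
def nnz (A : Matrix ι ι F2) : ℕ :=
  (Finset.univ.filter (fun p : ι × ι => A p.1 p.2 ≠ 0)).card

end Classical

section BaconShor

variable {m : ℕ}

/-- Qubit set of the generalized Bacon-Shor code: cells with `A i j = 1`. -/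
abbrev QA (A : Matrix (Fin m) (Fin m) F2) : Type := {c : Fin m × Fin m // A c.1 c.2 = 1}

/-- Generators of the gauge group. -/
def gaugeSet (A : Matrix (Fin m) (Fin m) F2) : Set (PauliSpace (QA A)) :=
  {v | ∃ c c' : QA A, c ≠ c' ∧
    ((c.1.1 = c'.1.1 ∧ v = Xop c + Xop c') ∨ (c.1.2 = c'.1.2 ∧ v = Zop c + Zop c'))}

/-- Gauge group of the generalized Bacon-Shor code. -/
def gaugeBS (A : Matrix (Fin m) (Fin m) F2) : Submodule F2 (PauliSpace (QA A)) :=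
  Submodule.span F2 (gaugeSet A)

/-- The row operator `R i`. -/
def Rop (A : Matrix (Fin m) (Fin m) F2) (i : Fin m) : PauliSpace (QA A) :=
  ∑ c ∈ Finset.univ.filter (fun c : QA A => c.1.1 = i), Zop c

/-- The column operator `C j`. -/
def Cop (A : Matrix (Fin m) (Fin m) F2) (j : Fin m) : PauliSpace (QA A) :=
  ∑ c ∈ Finset.univ.filter (fun c : QA A => c.1.2 = j), Xop c

/-- X-type operator parameterized by a binary vector. -/
def PXop (A : Matrix (Fin m) (Fin m) F2) (x : Fin m → F2) : PauliSpace (QA A) :=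
  ∑ j, x j • Cop A j

/-- Z-type operator parameterized by a binary vector. -/
def PZop (A : Matrix (Fin m) (Fin m) F2) (z : Fin m → F2) : PauliSpace (QA A) :=
  ∑ i, z i • Rop A i

end BaconShor

/-- Binary entropy. -/
noncomputable def H2 (p : ℝ) : ℝ := -p * Real.logb 2 p - (1 - p) * Real.logb 2 (1 - p)

/-!
The parity map sends a Pauli operator to the row parities of its `X`-part and the column
parities of its `Z`-part; its kernel is exactly the gauge group `G_A`, since a vector with even
fibre sums is a sum of pairs inside one fibre. Commuting with the gauge generators means that the
`X`-part is constant along columns and the `Z`-part along rows, i.e. `C(G_A)` consists of the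
operators `X(x ∘ col) Z(z ∘ row)`, whose parities are `(A x, Aᵀ z)`. So `C(G_A) / S_A` is
isomorphic to `Ccol(A) × Crow(A)`, of dimension `2 rank(A)`.

Pairing an operator with the stabilizers `X(x ∘ col)`, `Ax = 0`, and `Z(z ∘ row)`, `Aᵀz = 0`,
shows that it lies in `C(S_A)` exactly when its parities lie in `Ccol(A) × Crow(A)`. A dressed
logical operator therefore has a nonzero parity vector in `Ccol(A)` or `Crow(A)`, whose weight is
at most its own; conversely a codeword `u` is the parity vector of the operator that acts on one
qubit in each row (or column) where `u` is nonzero.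
-/

section FiberSum

variable {R : Type*} {Q ι : Type} [Fintype Q] [DecidableEq ι]

def fiberSum [CommSemiring R] (r : Q → ι) : (Q → R) →ₗ[R] ι → R where
  toFun f i := ∑ q with r q = i, f q
  map_add' f g := by ext i; simp [Finset.sum_add_distrib]
  map_smul' c f := by ext i; simp [Finset.mul_sum]

@[simp]
lemma fiberSum_apply [CommSemiring R] (r : Q → ι) (f : Q → R) (i : ι) :
    fiberSum r f i = ∑ q with r q = i, f q := rfl

lemma fiberSum_single [CommSemiring R] [DecidableEq Q] (r : Q → ι) (c : Q) (a : R) :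
    fiberSum r (Pi.single c a) = Pi.single (r c) a := by
  ext i
  by_cases h : r c = i
  · subst h; simp [Pi.single_apply]
  · simp [Pi.single_apply, h]

lemma dotProduct_fiberSum [CommSemiring R] [Fintype ι] (r : Q → ι) (f : Q → R) (z : ι → R) :
    fiberSum r f ⬝ᵥ z = ∑ q, f q * z (r q) := by
  simp only [dotProduct, fiberSum_apply, Finset.sum_mul]
  rw [← Finset.sum_fiberwise univ r]
  refine Finset.sum_congr rfl fun i _ => Finset.sum_congr rfl fun q hq => ?_
  rw [(Finset.mem_filter.1 hq).2]

/-- With `rep q` a fixed element of the fibre of `q`,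
`f = ∑ f q • (δ q - δ (rep q)) + ∑ f q • δ (rep q)`, and the second sum only collects the fibre
sums of `f` at the representatives. -/
theorem mem_of_fiberSum_eq_zero [CommRing R] [Fintype ι] [DecidableEq Q]
    {p : Submodule R (Q → R)} (r : Q → ι)
    (hp : ∀ c c', r c = r c' → Pi.single c 1 - Pi.single c' 1 ∈ p) {f : Q → R}
    (hf : fiberSum r f = 0) : f ∈ p := by
  obtain _ | _ := isEmpty_or_nonempty Q
  · simp [Subsingleton.elim f 0]
  set rep : Q → Q := fun q => Function.invFun r (r q)
  have hrep (q : Q) : r (rep q) = r q := Function.invFun_eq ⟨q, rfl⟩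
  have hrest : ∑ q, f q • Pi.single (rep q) (1 : R) = 0 := by
    rw [← Finset.sum_fiberwise univ r]
    refine Finset.sum_eq_zero fun i _ => ?_
    calc ∑ q with r q = i, f q • Pi.single (rep q) (1 : R)
        = fiberSum r f i • Pi.single (Function.invFun r i) 1 := by
          rw [fiberSum_apply, Finset.sum_smul]
          refine Finset.sum_congr rfl fun q hq => ?_
          simp only [rep, (Finset.mem_filter.1 hq).2]
      _ = 0 := by rw [hf, Pi.zero_apply, zero_smul]
  have hsplit : f = ∑ q, f q • (Pi.single q 1 - Pi.single (rep q) 1) := by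
    simp only [smul_sub, Finset.sum_sub_distrib, hrest, sub_zero]
    simp only [← Pi.single_smul, smul_eq_mul, mul_one]
    exact (Finset.univ_sum_single f).symm
  rw [hsplit]
  exact p.sum_mem fun q _ => p.smul_mem _ (hp q (rep q) (hrep q).symm)

lemma hwt_fiberSum_le [Fintype ι] (r : Q → ι) (f : Q → F2) : hwt (fiberSum r f) ≤ hwt f := by
  refine (Finset.card_le_card fun i hi => ?_).trans (Finset.card_image_le (f := r))
  obtain ⟨q, hq, hfq⟩ := Finset.exists_ne_zero_of_sum_ne_zero (Finset.mem_filter.1 hi).2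
  exact Finset.mem_image.2 ⟨q, by simpa using hfq, (Finset.mem_filter.1 hq).2⟩

theorem exists_fiberSum_eq_and_hwt_eq [Fintype ι] (r : Q → ι) {u : ι → F2}
    (hu : ∀ i, u i ≠ 0 → ∃ q, r q = i) : ∃ f, fiberSum r f = u ∧ hwt f = hwt u := by
  classical
  obtain rfl | hu0 := eq_or_ne u 0
  · exact ⟨0, map_zero _, by simp [hwt]⟩
  obtain ⟨i₀, hi₀⟩ := Function.ne_iff.1 hu0
  have : Nonempty Q := ⟨(hu i₀ hi₀).choose⟩
  set s : ι → Q := Function.invFun r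
  have hs (i : ι) (hi : u i ≠ 0) : r (s i) = i := Function.invFun_eq (hu i hi)
  refine ⟨fun q => if s (r q) = q then u (r q) else 0, ?_, ?_⟩
  · ext i
    rw [fiberSum_apply]
    by_cases hi : u i = 0
    · rw [hi]
      refine Finset.sum_eq_zero fun q hq => ?_
      simp [(Finset.mem_filter.1 hq).2, hi]
    · rw [Finset.sum_eq_single_of_mem (s i) (by simp [hs i hi])]
      · simp [hs i hi]
      · intro q hq hqs
        rw [(Finset.mem_filter.1 hq).2]
        simp [Ne.symm hqs]
  · refine Finset.card_nbij' r s ?_ ?_ ?_ ?_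
    · intro q hq
      by_cases h : s (r q) = q <;> simp_all
    · intro i hi
      have hi : u i ≠ 0 := by simpa using hi
      simp [hs i hi, hi]
    · intro q hq
      by_cases h : s (r q) = q <;> simp_all
    · intro i hi
      exact hs i (by simpa using hi)

end FiberSum

theorem Matrix.mem_range_mulVecLin_of_forall_dotProduct_eq_zero {K m n : Type*} [Field K]
    [Fintype m] [Fintype n] [DecidableEq m] [DecidableEq n] (B : Matrix m n K) {u : m → K}
    (hu : ∀ y, Bᵀ *ᵥ y = 0 → u ⬝ᵥ y = 0) : u ∈ LinearMap.range B.mulVecLin := by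
  have hann : dotProductEquiv K m u ∈ (LinearMap.ker Bᵀ.mulVecLin).dualAnnihilator :=
    (Submodule.mem_dualAnnihilator _).2 fun y hy => hu y hy
  rw [← LinearMap.range_dualMap_eq_dualAnnihilator_ker] at hann
  obtain ⟨φ, hφ⟩ := hann
  refine ⟨(dotProductEquiv K n).symm φ, (dotProductEquiv K m).injective ?_⟩
  refine LinearMap.ext fun y => ?_
  have := LinearMap.congr_fun hφ y
  simp only [LinearMap.dualMap_apply, mulVecLin_apply] at this
  rw [dotProductEquiv_apply_apply, ← this, ← (dotProductEquiv K n).apply_symm_apply φ,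
    dotProductEquiv_apply_apply, LinearEquiv.symm_apply_apply, dotProduct_mulVec,
    vecMul_transpose, mulVecLin_apply]

theorem Submodule.finrank_prod {K M N : Type*} [DivisionRing K] [AddCommGroup M] [Module K M]
    [AddCommGroup N] [Module K N] [FiniteDimensional K M] [FiniteDimensional K N]
    (p : Submodule K M) (q : Submodule K N) :
    Module.finrank K (p.prod q) = Module.finrank K p + Module.finrank K q := by
  let e : p.prod q ≃ₗ[K] p × q :=
    { toFun x := (⟨x.1.1, x.2.1⟩, ⟨x.1.2, x.2.2⟩)
      invFun x := ⟨(x.1, x.2), x.1.2, x.2.2⟩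
      map_add' _ _ := rfl
      map_smul' _ _ := rfl }
  rw [e.finrank_eq, Module.finrank_prod]

lemma Matrix.mulVec_dotProduct_eq_dotProduct_transpose_mulVec {R m n : Type*} [CommSemiring R]
    [Fintype m] [Fintype n] (B : Matrix m n R) (x : n → R) (z : m → R) :
    (B *ᵥ x) ⬝ᵥ z = x ⬝ᵥ (Bᵀ *ᵥ z) := by
  rw [dotProduct_comm, dotProduct_mulVec, ← mulVec_transpose, dotProduct_comm]

section Pauli

variable {Q : Type}

lemma omegaF_comm [Fintype Q] (u v : PauliSpace Q) : omegaF u v = omegaF v u :=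
  Finset.sum_congr rfl fun _ _ => by ring

lemma omegaF_add_right [Fintype Q] [DecidableEq Q] (u v w : PauliSpace Q) :
    omegaF u (v + w) = omegaF u v + omegaF u w := by
  rw [omegaF_comm, omegaF_add_left, omegaF_comm v, omegaF_comm w]

lemma omegaF_smul_right [Fintype Q] [DecidableEq Q] (c : F2) (u w : PauliSpace Q) :
    omegaF u (c • w) = c * omegaF u w := by
  rw [omegaF_comm, omegaF_smul_left, omegaF_comm]

lemma mem_pcent_span_iff [Fintype Q] [DecidableEq Q] {s : Set (PauliSpace Q)} {v : PauliSpace Q} :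
    v ∈ pcent (Submodule.span F2 s) ↔ ∀ g ∈ s, omegaF v g = 0 := by
  refine ⟨fun h g hg => h g (Submodule.subset_span hg), fun h g hg => ?_⟩
  induction hg using Submodule.span_induction with
  | mem x hx => exact h x hx
  | zero => simp [omegaF]
  | add x y _ _ hx hy => rw [omegaF_add_right, hx, hy, add_zero]
  | smul c x _ hx => rw [omegaF_smul_right, hx, mul_zero]

lemma omegaF_Xop [Fintype Q] [DecidableEq Q] (u : PauliSpace Q) (c : Q) :
    omegaF u (Xop c) = (u c).2 := by
  simp [omegaF, Xop, apply_ite]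

lemma omegaF_Zop [Fintype Q] [DecidableEq Q] (u : PauliSpace Q) (c : Q) :
    omegaF u (Zop c) = (u c).1 := by
  simp [omegaF, Zop, apply_ite]

def pauliX : (Q → F2) →ₗ[F2] PauliSpace Q := LinearMap.compLeft (LinearMap.inl F2 F2 F2) Q

def pauliZ : (Q → F2) →ₗ[F2] PauliSpace Q := LinearMap.compLeft (LinearMap.inr F2 F2 F2) Q

@[simp]
lemma pauliX_apply (f : Q → F2) (q : Q) : pauliX f q = (f q, 0) := rfl

@[simp]
lemma pauliZ_apply (f : Q → F2) (q : Q) : pauliZ f q = (0, f q) := rfl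

lemma pauliX_single [DecidableEq Q] (c : Q) : pauliX (Pi.single c 1) = Xop c := by
  ext q <;> by_cases h : q = c <;> simp [Xop, h]

lemma pauliZ_single [DecidableEq Q] (c : Q) : pauliZ (Pi.single c 1) = Zop c := by
  ext q <;> by_cases h : q = c <;> simp [Zop, h]

lemma pauliX_add_pauliZ (v : PauliSpace Q) :
    pauliX (fun q => (v q).1) + pauliZ (fun q => (v q).2) = v := by
  ext q <;> simp

lemma pwt_pauliX [Fintype Q] (f : Q → F2) : pwt (pauliX f) = hwt f := by
  simp [pwt, psupp, hwt]

lemma pwt_pauliZ [Fintype Q] (f : Q → F2) : pwt (pauliZ f) = hwt f := by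
  simp [pwt, psupp, hwt]

lemma hwt_fst_le_pwt [Fintype Q] (v : PauliSpace Q) :
    hwt (fun q => (v q).1) ≤ pwt v :=
  Finset.card_le_card fun q => by simp +contextual [psupp, Prod.ext_iff]

lemma hwt_snd_le_pwt [Fintype Q] (v : PauliSpace Q) :
    hwt (fun q => (v q).2) ≤ pwt v :=
  Finset.card_le_card fun q => by simp +contextual [psupp, Prod.ext_iff]

end Pauli

section BaconShor

variable {m : ℕ} (A : Matrix (Fin m) (Fin m) F2)

lemma card_QA : Fintype.card (QA A) = nnz A := by
  simp only [Fintype.card_subtype, nnz]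
  congr 1
  ext p
  simp only [Finset.mem_filter, Finset.mem_univ, true_and]
  exact ⟨fun h => h ▸ one_ne_zero, Fin.eq_one_of_ne_zero _⟩

lemma PXop_apply (x : Fin m → F2) (q : QA A) : PXop A x q = (x q.1.2, 0) := by
  simp [PXop, Cop, Xop, Finset.sum_apply, Prod.mk_zero_zero, Finset.sum_ite_eq]

lemma PZop_apply (z : Fin m → F2) (q : QA A) : PZop A z q = (0, z q.1.1) := by
  simp [PZop, Rop, Zop, Finset.sum_apply, Prod.mk_zero_zero, Finset.sum_ite_eq]

def parityMap : PauliSpace (QA A) →ₗ[F2] (Fin m → F2) × (Fin m → F2) :=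
  ((fiberSum fun c : QA A => c.1.1) ∘ₗ LinearMap.compLeft (LinearMap.fst F2 F2 F2) _).prod
    ((fiberSum fun c : QA A => c.1.2) ∘ₗ LinearMap.compLeft (LinearMap.snd F2 F2 F2) _)

lemma parityMap_apply (v : PauliSpace (QA A)) :
    parityMap A v =
      (fiberSum (fun c : QA A => c.1.1) fun c => (v c).1,
        fiberSum (fun c : QA A => c.1.2) fun c => (v c).2) := rfl

lemma parityMap_pauliX (f : QA A → F2) :
    parityMap A (pauliX f) = (fiberSum (fun c : QA A => c.1.1) f, 0) := by
  rw [parityMap_apply]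
  exact Prod.ext rfl (map_zero _)

lemma parityMap_pauliZ (f : QA A → F2) :
    parityMap A (pauliZ f) = (0, fiberSum (fun c : QA A => c.1.2) f) := by
  rw [parityMap_apply]
  exact Prod.ext (map_zero _) rfl

lemma sum_QA (g : Fin m × Fin m → F2) : ∑ c : QA A, g c.1 = ∑ p, A p.1 p.2 * g p := by
  rw [← Finset.sum_subtype (univ.filter fun p => A p.1 p.2 = 1) (by simp) g, Finset.sum_filter]
  refine Finset.sum_congr rfl fun p _ => ?_
  by_cases h : A p.1 p.2 = 0
  · simp [h]
  · have h1 : A p.1 p.2 = 1 := Fin.eq_one_of_ne_zero _ h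
    simp [h1]

lemma fiberSum_row_comp_col (x : Fin m → F2) :
    fiberSum (fun c : QA A => c.1.1) (fun c => x c.1.2) = A *ᵥ x := by
  ext i
  rw [fiberSum_apply, Finset.sum_filter, sum_QA A fun p => if p.1 = i then x p.2 else 0,
    Fintype.sum_prod_type, mulVec, dotProduct, Finset.sum_eq_single i]
  · simp
  · intro i' _ hi'
    simp [hi']
  · simp

lemma fiberSum_col_comp_row (z : Fin m → F2) :
    fiberSum (fun c : QA A => c.1.2) (fun c => z c.1.1) = Aᵀ *ᵥ z := by
  ext j
  rw [fiberSum_apply, Finset.sum_filter, sum_QA A fun p => if p.2 = j then z p.1 else 0,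
    Fintype.sum_prod_type, mulVec, dotProduct]
  refine Finset.sum_congr rfl fun i _ => ?_
  simp

lemma parityMap_PXop_add_PZop (x z : Fin m → F2) :
    parityMap A (PXop A x + PZop A z) = (A *ᵥ x, Aᵀ *ᵥ z) := by
  simp [parityMap_apply, PXop_apply, PZop_apply, fiberSum_row_comp_col, fiberSum_col_comp_row]

theorem ker_parityMap : LinearMap.ker (parityMap A) = gaugeBS A := by
  apply le_antisymm
  · intro v hv
    have hv := LinearMap.mem_ker.1 hv
    rw [parityMap_apply, Prod.mk_eq_zero] at hv
    rw [← pauliX_add_pauliZ v]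
    refine add_mem (mem_of_fiberSum_eq_zero (p := (gaugeBS A).comap pauliX) _ ?_ hv.1)
      (mem_of_fiberSum_eq_zero (p := (gaugeBS A).comap pauliZ) _ ?_ hv.2)
    · intro c c' h
      obtain rfl | hc := eq_or_ne c c'
      · simp
      refine Submodule.subset_span ⟨c, c', hc, Or.inl ⟨h, ?_⟩⟩
      rw [map_sub, pauliX_single, pauliX_single, ZModModule.sub_eq_add]
    · intro c c' h
      obtain rfl | hc := eq_or_ne c c'
      · simp
      refine Submodule.subset_span ⟨c, c', hc, Or.inr ⟨h, ?_⟩⟩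
      rw [map_sub, pauliZ_single, pauliZ_single, ZModModule.sub_eq_add]
  · rw [gaugeBS, Submodule.span_le]
    rintro _ ⟨c, c', -, ⟨h, rfl⟩ | ⟨h, rfl⟩⟩
    · rw [SetLike.mem_coe, LinearMap.mem_ker, ← pauliX_single, ← pauliX_single, ← map_add,
        parityMap_pauliX, map_add, fiberSum_single, fiberSum_single, h, ZModModule.add_self,
        Prod.mk_zero_zero]
    · rw [SetLike.mem_coe, LinearMap.mem_ker, ← pauliZ_single, ← pauliZ_single, ← map_add,
        parityMap_pauliZ, map_add, fiberSum_single, fiberSum_single, h, ZModModule.add_self,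
        Prod.mk_zero_zero]

theorem mem_pcent_gaugeBS_iff {v : PauliSpace (QA A)} :
    v ∈ pcent (gaugeBS A) ↔ ∃ x z, v = PXop A x + PZop A z := by
  simp only [gaugeBS, mem_pcent_span_iff, gaugeSet]
  constructor
  · intro hv
    have hX : Function.FactorsThrough (fun c : QA A => (v c).1) fun c => c.1.2 := by
      intro c c' h
      obtain rfl | hc := eq_or_ne c c'
      · rfl
      have := hv _ ⟨c, c', hc, Or.inr ⟨h, rfl⟩⟩
      rwa [omegaF_add_right, omegaF_Zop, omegaF_Zop, ← ZModModule.sub_eq_add, sub_eq_zero] at this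
    have hZ : Function.FactorsThrough (fun c : QA A => (v c).2) fun c => c.1.1 := by
      intro c c' h
      obtain rfl | hc := eq_or_ne c c'
      · rfl
      have := hv _ ⟨c, c', hc, Or.inl ⟨h, rfl⟩⟩
      rwa [omegaF_add_right, omegaF_Xop, omegaF_Xop, ← ZModModule.sub_eq_add, sub_eq_zero] at this
    refine ⟨Function.extend (fun c : QA A => c.1.2) (fun c => (v c).1) 0,
      Function.extend (fun c : QA A => c.1.1) (fun c => (v c).2) 0, ?_⟩
    ext q
    · simp [PXop_apply, PZop_apply, hX.extend_apply]
    · simp [PXop_apply, PZop_apply, hZ.extend_apply]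
  · rintro ⟨x, z, rfl⟩ _ ⟨c, c', -, ⟨h, rfl⟩ | ⟨h, rfl⟩⟩
    · simp [omegaF_add_right, omegaF_Xop, PXop_apply, PZop_apply, h, ZModModule.add_self]
    · simp [omegaF_add_right, omegaF_Zop, PXop_apply, PZop_apply, h, ZModModule.add_self]

lemma omegaF_PXop_add_PZop (v : PauliSpace (QA A)) (x z : Fin m → F2) :
    omegaF v (PXop A x + PZop A z) = (parityMap A v).1 ⬝ᵥ z + (parityMap A v).2 ⬝ᵥ x := by
  simp [omegaF, parityMap_apply, dotProduct_fiberSum, PXop_apply, PZop_apply,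
    Finset.sum_add_distrib]

theorem mem_pstab_gaugeBS_iff {s : PauliSpace (QA A)} :
    s ∈ pstab (gaugeBS A) ↔ ∃ x z, A *ᵥ x = 0 ∧ Aᵀ *ᵥ z = 0 ∧ s = PXop A x + PZop A z := by
  rw [pstab, Submodule.mem_inf, mem_pcent_gaugeBS_iff, ← ker_parityMap]
  constructor
  · rintro ⟨hs, x, z, rfl⟩
    rw [LinearMap.mem_ker, parityMap_PXop_add_PZop, Prod.mk_eq_zero] at hs
    exact ⟨x, z, hs.1, hs.2, rfl⟩
  · rintro ⟨x, z, hx, hz, rfl⟩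
    refine ⟨?_, x, z, rfl⟩
    rw [LinearMap.mem_ker, parityMap_PXop_add_PZop, hx, hz, Prod.mk_zero_zero]

lemma Ccol_eq_range : Ccol A = LinearMap.range A.mulVecLin := (range_mulVecLin A).symm

lemma Crow_eq_range : Crow A = LinearMap.range Aᵀ.mulVecLin := by
  rw [range_mulVecLin]
  rfl

lemma finrank_Ccol : Module.finrank F2 (Ccol A) = A.rank := by
  rw [Ccol_eq_range, Matrix.rank]

lemma finrank_Crow : Module.finrank F2 (Crow A) = A.rank := by
  rw [Crow_eq_range, ← rank_transpose, Matrix.rank]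

theorem mem_pcent_pstab_gaugeBS_iff {v : PauliSpace (QA A)} :
    v ∈ pcent (pstab (gaugeBS A)) ↔ (parityMap A v).1 ∈ Ccol A ∧ (parityMap A v).2 ∈ Crow A := by
  rw [Ccol_eq_range, Crow_eq_range]
  constructor
  · intro hv
    refine ⟨mem_range_mulVecLin_of_forall_dotProduct_eq_zero A fun z hz => ?_,
      mem_range_mulVecLin_of_forall_dotProduct_eq_zero Aᵀ fun x hx => ?_⟩
    · have := hv _ (mem_pstab_gaugeBS_iff A |>.2 ⟨0, z, mulVec_zero A, hz, rfl⟩)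
      simpa [omegaF_PXop_add_PZop] using this
    · rw [transpose_transpose] at hx
      have := hv _ (mem_pstab_gaugeBS_iff A |>.2 ⟨x, 0, hx, mulVec_zero Aᵀ, rfl⟩)
      simpa [omegaF_PXop_add_PZop] using this
  · rintro ⟨⟨x₀, hx₀⟩, ⟨z₀, hz₀⟩⟩ s hs
    obtain ⟨x, z, hx, hz, rfl⟩ := mem_pstab_gaugeBS_iff A |>.1 hs
    rw [omegaF_PXop_add_PZop, ← hx₀, ← hz₀, mulVecLin_apply, mulVecLin_apply,
      mulVec_dotProduct_eq_dotProduct_transpose_mulVec, hz,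
      mulVec_dotProduct_eq_dotProduct_transpose_mulVec, transpose_transpose, hx, dotProduct_zero,
      dotProduct_zero, add_zero]

theorem finrank_pcent_gaugeBS :
    Module.finrank F2 (pcent (gaugeBS A)) =
      Module.finrank F2 (pstab (gaugeBS A)) + 2 * A.rank := by
  let f := (parityMap A).domRestrict (pcent (gaugeBS A))
  have hker : Module.finrank F2 (LinearMap.ker f) = Module.finrank F2 (pstab (gaugeBS A)) := by
    have : LinearMap.ker f = (pstab (gaugeBS A)).comap (pcent (gaugeBS A)).subtype := by
      rw [LinearMap.ker_domRestrict, ker_parityMap, pstab, Submodule.comap_inf,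
        Submodule.comap_subtype_self, inf_top_eq]
    rw [this]
    exact (Submodule.comapSubtypeEquivOfLe inf_le_right).finrank_eq
  have hrange : LinearMap.range f = (Ccol A).prod (Crow A) := by
    ext p
    simp only [f, Ccol_eq_range, Crow_eq_range, LinearMap.range_domRestrict, Submodule.mem_map, Submodule.mem_prod,
      mem_pcent_gaugeBS_iff]
    constructor
    · rintro ⟨_, ⟨x, z, rfl⟩, rfl⟩
      rw [parityMap_PXop_add_PZop]
      exact ⟨⟨x, rfl⟩, ⟨z, rfl⟩⟩
    · rintro ⟨⟨x, hx⟩, ⟨z, hz⟩⟩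
      exact ⟨_, ⟨x, z, rfl⟩, by rw [parityMap_PXop_add_PZop]; exact Prod.ext hx hz⟩
  have := LinearMap.finrank_range_add_finrank_ker f
  rw [hrange, Submodule.finrank_prod, finrank_Ccol, finrank_Crow, hker] at this
  omega

theorem le_pwt_of_mem_pcent_pstab {v : PauliSpace (QA A)} (hv : v ∈ pcent (pstab (gaugeBS A)))
    (hvG : v ∉ gaugeBS A) : min (drow A) (dcol A) ≤ pwt v := by
  obtain ⟨hcol, hrow⟩ := (mem_pcent_pstab_gaugeBS_iff A).1 hv
  rw [← ker_parityMap, LinearMap.mem_ker, ← Prod.mk_zero_zero, Prod.mk.injEq, not_and_or] at hvG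
  rcases hvG with hX | hZ
  · calc min (drow A) (dcol A) ≤ dcol A := min_le_right _ _
      _ ≤ hwt (parityMap A v).1 := Nat.sInf_le ⟨_, hcol, hX, rfl⟩
      _ ≤ hwt fun q => (v q).1 := hwt_fiberSum_le _ _
      _ ≤ pwt v := hwt_fst_le_pwt v
  · calc min (drow A) (dcol A) ≤ drow A := min_le_left _ _
      _ ≤ hwt (parityMap A v).2 := Nat.sInf_le ⟨_, hrow, hZ, rfl⟩
      _ ≤ hwt fun q => (v q).2 := hwt_fiberSum_le _ _
      _ ≤ pwt v := hwt_snd_le_pwt v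

theorem dcol_mem_distSet (h : Ccol A ≠ ⊥) : dcol A ∈ distSet (gaugeBS A) := by
  obtain ⟨u₀, hu₀, hu₀ne⟩ := Submodule.exists_mem_ne_zero_of_ne_bot h
  obtain ⟨u, hu, hune, hwtu⟩ := Nat.sInf_mem
    (⟨_, u₀, hu₀, hu₀ne, rfl⟩ : {w | ∃ v ∈ Ccol A, v ≠ 0 ∧ hwt v = w}.Nonempty)
  have hrow (i : Fin m) (hi : u i ≠ 0) : ∃ c : QA A, c.1.1 = i := by
    obtain ⟨x, rfl⟩ := Ccol_eq_range A ▸ hu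
    simp only [mulVecLin_apply, mulVec, dotProduct] at hi
    obtain ⟨j, -, hj⟩ := Finset.exists_ne_zero_of_sum_ne_zero hi
    exact ⟨⟨(i, j), Fin.eq_one_of_ne_zero _ (left_ne_zero_of_mul hj)⟩, rfl⟩
  obtain ⟨f, hf, hwtf⟩ := exists_fiberSum_eq_and_hwt_eq _ hrow
  have hL : parityMap A (pauliX f) = (u, 0) := by rw [parityMap_pauliX, hf]
  refine ⟨pauliX f, (mem_pcent_pstab_gaugeBS_iff A).2 ?_, ?_, ?_⟩
  · rw [hL]
    exact ⟨hu, zero_mem _⟩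
  · rw [← ker_parityMap, LinearMap.mem_ker, hL]
    exact fun h => hune (congrArg Prod.fst h)
  · rw [pwt_pauliX, hwtf, hwtu]
    rfl

theorem drow_mem_distSet (h : Crow A ≠ ⊥) : drow A ∈ distSet (gaugeBS A) := by
  obtain ⟨u₀, hu₀, hu₀ne⟩ := Submodule.exists_mem_ne_zero_of_ne_bot h
  obtain ⟨u, hu, hune, hwtu⟩ := Nat.sInf_mem
    (⟨_, u₀, hu₀, hu₀ne, rfl⟩ : {w | ∃ v ∈ Crow A, v ≠ 0 ∧ hwt v = w}.Nonempty)
  have hcol (j : Fin m) (hj : u j ≠ 0) : ∃ c : QA A, c.1.2 = j := by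
    obtain ⟨z, rfl⟩ := Crow_eq_range A ▸ hu
    simp only [mulVecLin_apply, mulVec, dotProduct, transpose_apply] at hj
    obtain ⟨i, -, hi⟩ := Finset.exists_ne_zero_of_sum_ne_zero hj
    exact ⟨⟨(i, j), Fin.eq_one_of_ne_zero _ (left_ne_zero_of_mul hi)⟩, rfl⟩
  obtain ⟨f, hf, hwtf⟩ := exists_fiberSum_eq_and_hwt_eq _ hcol
  have hL : parityMap A (pauliZ f) = (0, u) := by rw [parityMap_pauliZ, hf]
  refine ⟨pauliZ f, (mem_pcent_pstab_gaugeBS_iff A).2 ?_, ?_, ?_⟩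
  · rw [hL]
    exact ⟨zero_mem _, hu⟩
  · rw [← ker_parityMap, LinearMap.mem_ker, hL]
    exact fun h => hune (congrArg Prod.snd h)
  · rw [pwt_pauliZ, hwtf, hwtu]
    rfl

end BaconShor

theorem generalized_bacon_shor_parameters_general {m : ℕ} (A : Matrix (Fin m) (Fin m) F2) :
    Fintype.card (QA A) = nnz A ∧
    Module.finrank F2 ↥(pcent (gaugeBS A)) =
      Module.finrank F2 ↥(pstab (gaugeBS A)) + 2 * A.rank ∧
    (1 ≤ A.rank → sInf (distSet (gaugeBS A)) = min (drow A) (dcol A)) := by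
  refine ⟨card_QA A, finrank_pcent_gaugeBS A, fun hrank => ?_⟩
  have hcol : Ccol A ≠ ⊥ := by
    rintro h
    rw [← finrank_Ccol, h, finrank_bot] at hrank
    omega
  have hrow : Crow A ≠ ⊥ := by
    rintro h
    rw [← finrank_Crow, h, finrank_bot] at hrank
    omega
  refine IsLeast.csInf_eq ⟨?_, fun w ⟨v, hv, hvG, hw⟩ => hw ▸ le_pwt_of_mem_pcent_pstab A hv hvG⟩
  rcases min_choice (drow A) (dcol A) with h | h <;> rw [h]
  · exact drow_mem_distSet A hrow
  · exact dcol_mem_distSet A hcol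

/-- Theorem 2 of the paper: the generalized Bacon-Shor code of a nonzero binary matrix `A`
has `|A|` physical qubits, `rank(A)` logical qubits, and distance `min(drow(A), dcol(A))`. -/
theorem generalized_bacon_shor_parameters {m : ℕ} (A : Matrix (Fin m) (Fin m) F2)
    (hA : A ≠ 0) :
    Fintype.card (QA A) = nnz A ∧
    Module.finrank F2 ↥(pcent (gaugeBS A)) =
      Module.finrank F2 ↥(pstab (gaugeBS A)) + 2 * A.rank ∧
    (1 ≤ A.rank → sInf (distSet (gaugeBS A)) = min (drow A) (dcol A)) :=
  generalized_bacon_shor_parameters_general A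
end

section
/- Let α > 0 and 0 < β < 1/2 be real constants with α + H₂(β) < 1, where H₂ is the binary entropy function. Then there exists m₀ such that for all integers m ≥ m₀ and all natural numbers k with k ≤ α·m there exists an m×m matrix A over F₂ with rank(A) = k such that every nonzero vector of Ccol(A) has Hamming weight at least β·m and every nonzero vector of Crow(A) has Hamming weight at least β·m. -/
set_option linter.unusedSectionVars false

open Finset Matrix

/-! If `B : Matrix (Fin m) (Fin k) F2` is drawn uniformly, then for each of the `2 ^ k - 1`
nonzero messages `x` the codeword `B *ᵥ x` is uniform on `F2 ^ m`, so by the union bound some `B`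
sends no nonzero message into the Hamming ball of radius `βm`, provided
`(2 ^ k - 1) · |ball| < 2 ^ m`. Weighting each vector `v` by `β ^ wt v (1 - β) ^ (m - wt v)`, a
probability distribution in which every point of the ball has mass at least `2 ^ (-H₂(β) m)`
(as `β ≤ 1/2`), gives `|ball| ≤ 2 ^ (H₂(β) m)`, so the condition holds when `α + H₂(β) < 1`.
As `0` lies in the ball, such a `B` is injective, hence `Bᵀ` is surjective and `A = B Bᵀ` is a
symmetric matrix of rank `k` whose column space, equal to its row space, is the code `range B`. -/

theorem two_rpow_neg_H2_mul_le {β : ℝ} (hβ0 : 0 < β) (hβ : β ≤ 1 / 2) {n w : ℕ}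
    (hwn : w ≤ n) (hw : (w : ℝ) ≤ β * n) :
    (2 : ℝ) ^ (-(H2 β * n)) ≤ β ^ w * (1 - β) ^ (n - w) := by
  have h1β : 0 < 1 - β := by linarith
  rw [← Real.log_le_log_iff (by positivity) (by positivity), Real.log_rpow two_pos,
    Real.log_mul (by positivity) (by positivity), Real.log_pow, Real.log_pow,
    Nat.cast_sub hwn]
  have hH2 : H2 β * Real.log 2 = -(β * Real.log β) - (1 - β) * Real.log (1 - β) := by
    rw [H2, ← Real.log_div_log, ← Real.log_div_log]
    field_simp
  have hlog : Real.log β ≤ Real.log (1 - β) := Real.log_le_log hβ0 (by linarith)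
  nlinarith [mul_nonneg (sub_nonneg.2 hw) (sub_nonneg.2 hlog)]

noncomputable def hwtBall (ι : Type) [Fintype ι] [DecidableEq ι] (r : ℝ) : Finset (ι → F2) :=
  {v | (hwt v : ℝ) ≤ r}

section HammingBall

variable {ι : Type} [Fintype ι] [DecidableEq ι]

theorem mem_hwtBall {r : ℝ} {v : ι → F2} : v ∈ hwtBall ι r ↔ (hwt v : ℝ) ≤ r := by
  simp [hwtBall]

theorem zero_mem_hwtBall {r : ℝ} (hr : 0 ≤ r) : 0 ∈ hwtBall ι r := by
  simpa [mem_hwtBall, hwt] using hr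

theorem sum_pow_hwt_mul_pow_sub_hwt {R : Type*} [CommSemiring R] (a b : R) :
    ∑ v : ι → F2, a ^ hwt v * b ^ (Fintype.card ι - hwt v) = (a + b) ^ Fintype.card ι := by
  have hsplit (v : ι → F2) :
      a ^ hwt v * b ^ (Fintype.card ι - hwt v) = ∏ i, if v i ≠ 0 then a else b := by
    rw [prod_ite, prod_const, prod_const, hwt, ← card_univ,
      ← card_filter_add_card_filter_not (s := univ) (fun i => v i ≠ 0), Nat.add_sub_cancel_left]
  have hcoord : ∑ c : F2, (if c ≠ 0 then a else b) = a + b := by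
    rw [show (univ : Finset F2) = {0, 1} from rfl]
    simp [add_comm]
  simp only [hsplit]
  rw [← Fintype.prod_sum (fun _ c => if c ≠ 0 then a else b)]
  simp only [hcoord, prod_const, card_univ]

theorem card_hwtBall_le {β : ℝ} (hβ0 : 0 < β) (hβ : β ≤ 1 / 2) :
    (#(hwtBall ι (β * Fintype.card ι)) : ℝ) ≤ 2 ^ (H2 β * Fintype.card ι) := by
  set n := Fintype.card ι
  have h1β : 0 ≤ 1 - β := by linarith
  have hmass : #(hwtBall ι (β * n)) * (2 : ℝ) ^ (-(H2 β * n)) ≤ 1 := calc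
    _ = ∑ _v ∈ hwtBall ι (β * n), (2 : ℝ) ^ (-(H2 β * n)) := by rw [sum_const, nsmul_eq_mul]
    _ ≤ ∑ v ∈ hwtBall ι (β * n), β ^ hwt v * (1 - β) ^ (n - hwt v) :=
      sum_le_sum fun v hv =>
        two_rpow_neg_H2_mul_le hβ0 hβ (card_filter_le _ _) (mem_hwtBall.1 hv)
    _ ≤ ∑ v, β ^ hwt v * (1 - β) ^ (n - hwt v) :=
      sum_le_sum_of_subset_of_nonneg (subset_univ _) fun _ _ _ => by positivity
    _ = 1 := by rw [sum_pow_hwt_mul_pow_sub_hwt, add_sub_cancel, one_pow]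
  rwa [Real.rpow_neg zero_le_two, ← div_eq_mul_inv, div_le_one (by positivity)] at hmass

theorem two_pow_mul_card_hwtBall_le {α β : ℝ} (hβ0 : 0 < β) (hβ : β ≤ 1 / 2)
    (hαβ : α + H2 β ≤ 1) {k : ℕ} (hk : (k : ℝ) ≤ α * Fintype.card ι) :
    2 ^ k * #(hwtBall ι (β * Fintype.card ι)) ≤ 2 ^ Fintype.card ι := by
  set n := Fintype.card ι
  suffices (2 : ℝ) ^ k * #(hwtBall ι (β * n)) ≤ 2 ^ n by exact_mod_cast this
  calc (2 : ℝ) ^ k * #(hwtBall ι (β * n)) ≤ 2 ^ (α * n) * 2 ^ (H2 β * n) := by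
        rw [← Real.rpow_natCast]
        gcongr
        · norm_num
        · exact card_hwtBall_le hβ0 hβ
    _ = 2 ^ ((α + H2 β) * n) := by rw [← Real.rpow_add two_pos]; ring_nf
    _ ≤ 2 ^ (n : ℝ) := Real.rpow_le_rpow_of_exponent_le one_le_two (by nlinarith)
    _ = 2 ^ n := Real.rpow_natCast 2 n

end HammingBall

theorem AddMonoidHom.card_filter_mem_mul_card_eq {G H : Type*} [AddGroup G] [Fintype G]
    [AddMonoid H] [Fintype H] [DecidableEq H] (f : G →+ H) (hf : Function.Surjective f)
    (S : Finset H) :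
    #{g | f g ∈ S} * Fintype.card H = Fintype.card G * #S := by
  have hfiber (h : H) : #{g | f g = h} = #{g | f g = 0} :=
    card_fiber_eq_of_mem_range f (hf h) (hf 0)
  have hG : Fintype.card G = Fintype.card H * #{g | f g = 0} := by
    rw [← card_univ, card_eq_sum_card_fiberwise fun g _ => mem_univ (f g),
      sum_congr rfl fun h _ => hfiber h, sum_const, card_univ, smul_eq_mul]
  rw [← sum_card_fiberwise_eq_card_filter, sum_congr rfl fun h _ => hfiber h, sum_const,
    smul_eq_mul, hG]
  ring

section FiniteField

variable {K m n : Type*} [Field K] [Fintype K] [Fintype m] [Fintype n]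

theorem Matrix.mulVec_left_surjective {x : n → K} (hx : x ≠ 0) :
    Function.Surjective fun B : Matrix m n K => B *ᵥ x := by
  classical
  obtain ⟨j, hj⟩ := Function.ne_iff.1 hx
  refine fun v => ⟨vecMulVec v (Pi.single j (x j)⁻¹), ?_⟩
  simp [vecMulVec_mulVec, single_dotProduct, inv_mul_cancel₀ hj]

theorem Matrix.exists_forall_mulVec_notMem (S : Finset (m → K))
    (hS : (Fintype.card K ^ Fintype.card n - 1) * #S < Fintype.card K ^ Fintype.card m) :
    ∃ B : Matrix m n K, ∀ x ≠ 0, B *ᵥ x ∉ S := by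
  classical
  by_contra! hbad
  have hcover : (univ : Finset (Matrix m n K)) ⊆
      ({x | x ≠ 0} : Finset (n → K)).biUnion fun x => {B | B *ᵥ x ∈ S} := fun B _ => by
    obtain ⟨x, hx, hBx⟩ := hbad B
    simp only [mem_biUnion, mem_filter, mem_univ, true_and]
    exact ⟨x, hx, hBx⟩
  have hfiber {x : n → K} (hx : x ∈ ({x | x ≠ 0} : Finset (n → K))) :
      #{B : Matrix m n K | B *ᵥ x ∈ S} * Fintype.card (m → K) =
        Fintype.card (Matrix m n K) * #S :=
    (mulVec.addMonoidHomLeft x).card_filter_mem_mul_card_eq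
      (mulVec_left_surjective (mem_filter.1 hx).2) S
  have hnonzero : #({x | x ≠ 0} : Finset (n → K)) = Fintype.card K ^ Fintype.card n - 1 := by
    rw [filter_ne', card_erase_of_mem (mem_univ _), card_univ, Fintype.card_fun]
  have := calc Fintype.card (Matrix m n K) * Fintype.card (m → K)
      ≤ (∑ x ∈ {x | x ≠ 0}, #{B : Matrix m n K | B *ᵥ x ∈ S}) * Fintype.card (m → K) :=
        Nat.mul_le_mul_right _ ((card_le_card hcover).trans card_biUnion_le)
    _ = (Fintype.card K ^ Fintype.card n - 1) * #S * Fintype.card (Matrix m n K) := by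
        rw [sum_mul, sum_congr rfl fun x hx => hfiber hx, sum_const, hnonzero, smul_eq_mul]
        ring
    _ < Fintype.card K ^ Fintype.card m * Fintype.card (Matrix m n K) :=
        Nat.mul_lt_mul_of_pos_right hS Fintype.card_pos
  rw [Fintype.card_fun, mul_comm] at this
  exact this.false

end FiniteField

section MulTranspose

variable {K m n : Type*} [Field K] [Fintype m] [Fintype n] {B : Matrix m n K}

theorem Matrix.range_mulVecLin_mul_transpose (hB : Function.Injective B.mulVecLin) :
    LinearMap.range (B * Bᵀ).mulVecLin = LinearMap.range B.mulVecLin := by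
  have hsurj : LinearMap.range Bᵀ.mulVecLin = ⊤ := by
    apply Submodule.eq_top_of_finrank_eq
    rw [← Matrix.rank, Matrix.rank_transpose, Matrix.rank, LinearMap.finrank_range_of_inj hB]
  rw [Matrix.mulVecLin_mul, LinearMap.range_comp_of_range_eq_top _ hsurj]

theorem Matrix.rank_mul_transpose (hB : Function.Injective B.mulVecLin) :
    (B * Bᵀ).rank = Fintype.card n := by
  rw [Matrix.rank, range_mulVecLin_mul_transpose hB, LinearMap.finrank_range_of_inj hB,
    Module.finrank_fintype_fun_eq_card]

end MulTranspose

section MulTransposeF2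

variable {ι n : Type} [Fintype ι] [Fintype n] {B : Matrix ι n F2}

theorem Ccol_mul_transpose (hB : Function.Injective B.mulVecLin) :
    Ccol (B * Bᵀ) = LinearMap.range B.mulVecLin :=
  (Matrix.range_mulVecLin _).symm.trans (Matrix.range_mulVecLin_mul_transpose hB)

theorem Crow_mul_transpose (hB : Function.Injective B.mulVecLin) :
    Crow (B * Bᵀ) = LinearMap.range B.mulVecLin := by
  rw [Crow, ← Ccol_mul_transpose hB, Ccol, Matrix.transpose_mul, Matrix.transpose_transpose]

end MulTransposeF2

theorem gilbert_varshamov_matrices_general (α β : ℝ) (hβ0 : 0 < β) (hβ : β < 1 / 2)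
    (hαβ : α + H2 β < 1) :
    ∃ m₀ : ℕ, ∀ m : ℕ, m₀ ≤ m → ∀ k : ℕ, (k : ℝ) ≤ α * m →
      ∃ A : Matrix (Fin m) (Fin m) F2, A.rank = k ∧
        (∀ v ∈ Ccol A, v ≠ 0 → β * m ≤ (hwt v : ℝ)) ∧
        (∀ v ∈ Crow A, v ≠ 0 → β * m ≤ (hwt v : ℝ)) := by
  refine ⟨0, fun m _ k hk => ?_⟩
  set S := hwtBall (Fin m) (β * m)
  have h0S : (0 : Fin m → F2) ∈ S := zero_mem_hwtBall (by positivity)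
  have hvolume : 2 ^ k * #S ≤ 2 ^ m := by
    simpa using two_pow_mul_card_hwtBall_le (ι := Fin m) hβ0 hβ.le hαβ.le (by simpa using hk)
  obtain ⟨B, hB⟩ := Matrix.exists_forall_mulVec_notMem (K := F2) (n := Fin k) S (by
    rw [ZMod.card, Fintype.card_fin, Fintype.card_fin, Nat.sub_one_mul]
    have := Nat.le_mul_of_pos_left #S (Nat.two_pow_pos k)
    have := card_pos.2 ⟨0, h0S⟩
    omega)
  have hBinj : Function.Injective B.mulVecLin := by
    rw [← LinearMap.ker_eq_bot, LinearMap.ker_eq_bot']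
    intro x hx
    by_contra hx0
    exact hB x hx0 (by rwa [← Matrix.mulVecLin_apply, hx])
  have hdist : ∀ v ∈ LinearMap.range B.mulVecLin, v ≠ 0 → β * m ≤ (hwt v : ℝ) := by
    rintro _ ⟨x, rfl⟩ hv
    have hx : x ≠ 0 := by rintro rfl; exact hv (map_zero _)
    exact (not_le.1 (mem_hwtBall.not.1 (hB x hx))).le
  refine ⟨B * Bᵀ, ?_, ?_, ?_⟩
  · rw [Matrix.rank_mul_transpose hBinj, Fintype.card_fin]
  · rwa [Ccol_mul_transpose hBinj]
  · rwa [Crow_mul_transpose hBinj]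

/-- Gilbert-Varshamov bound for binary matrices: if `α + H₂(β) < 1`, then for all
sufficiently large `m` and all `k ≤ αm` there is an `m × m` binary matrix of rank `k`
whose row and column spaces both have minimum distance at least `βm`. -/
theorem gilbert_varshamov_matrices (α β : ℝ) (hα : 0 < α) (hβ0 : 0 < β) (hβ : β < 1 / 2)
    (hαβ : α + H2 β < 1) :
    ∃ m₀ : ℕ, ∀ m : ℕ, m₀ ≤ m → ∀ k : ℕ, (k : ℝ) ≤ α * m →
      ∃ A : Matrix (Fin m) (Fin m) F2, A.rank = k ∧
        (∀ v ∈ Ccol A, v ≠ 0 → β * m ≤ (hwt v : ℝ)) ∧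
        (∀ v ∈ Crow A, v ≠ 0 → β * m ≤ (hwt v : ℝ)) :=
  gilbert_varshamov_matrices_general α β hβ0 hβ hαβ
end

section
/- For every nonzero m×m matrix A over F₂, the product of the minimum distances of its row and column spaces is at most the number of nonzero entries of A: drow(A)·dcol(A) ≤ |A|. -/
/-! A nonzero vector `v` of the row space of `A` is a combination of rows, so each column `j`
with `v j ≠ 0` is a nonzero vector of the column space and has weight at least `dcol A`.
Summing over the support of `v` gives `hwt v * dcol A ≤ nnz A`; take `v` of weight `drow A`. -/

set_option linter.unusedSectionVars false

open Finset Matrix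

lemma apply_eq_zero_of_mem_Crow {ι : Type} {A : Matrix ι ι F2} {v : ι → F2} (hv : v ∈ Crow A)
    {j : ι} (hj : Aᵀ j = 0) : v j = 0 := by
  have hker : Crow A ≤ LinearMap.ker (LinearMap.proj j : (ι → F2) →ₗ[F2] F2) :=
    Submodule.span_le.mpr <| Set.range_subset_iff.mpr fun i => congrFun hj i
  exact hker hv

section Weights

variable {ι : Type} [Fintype ι]

lemma nnz_eq_sum_hwt_transpose (A : Matrix ι ι F2) : nnz A = ∑ j, hwt (Aᵀ j) := by
  simp only [nnz, hwt, card_filter]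
  rw [Fintype.sum_prod_type, sum_comm]
  rfl

lemma dcol_le_hwt_transpose {A : Matrix ι ι F2} {j : ι} (hj : Aᵀ j ≠ 0) :
    dcol A ≤ hwt (Aᵀ j) :=
  Nat.sInf_le ⟨Aᵀ j, Submodule.subset_span ⟨j, rfl⟩, hj, rfl⟩

lemma hwt_mul_dcol_le_nnz {A : Matrix ι ι F2} {v : ι → F2} (hv : v ∈ Crow A) :
    hwt v * dcol A ≤ nnz A := by
  calc hwt v * dcol A = ∑ _j ∈ univ.filter (fun j => v j ≠ 0), dcol A := by
        rw [sum_const, smul_eq_mul, hwt]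
    _ ≤ ∑ j ∈ univ.filter (fun j => v j ≠ 0), hwt (Aᵀ j) :=
        sum_le_sum fun j hj => dcol_le_hwt_transpose
          fun h => (mem_filter.mp hj).2 (apply_eq_zero_of_mem_Crow hv h)
    _ ≤ ∑ j, hwt (Aᵀ j) := sum_le_sum_of_subset (filter_subset _ _)
    _ = nnz A := (nnz_eq_sum_hwt_transpose A).symm

end Weights

theorem drow_mul_dcol_le_nnz_general {m : ℕ} (A : Matrix (Fin m) (Fin m) F2) :
    drow A * dcol A ≤ nnz A := by
  obtain hempty | hne := Set.eq_empty_or_nonempty {w | ∃ v ∈ Crow A, v ≠ 0 ∧ hwt v = w}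
  · simp [drow, hempty] -- `sInf ∅ = 0`
  obtain ⟨v, hv, -, hvwt⟩ := Nat.sInf_mem hne
  rw [drow, ← hvwt]
  exact hwt_mul_dcol_le_nnz hv

/-- For every nonzero binary matrix `A`, `drow(A) · dcol(A) ≤ |A|`. -/
theorem drow_mul_dcol_le_nnz {m : ℕ} (A : Matrix (Fin m) (Fin m) F2) (hA : A ≠ 0) :
    drow A * dcol A ≤ nnz A :=
  drow_mul_dcol_le_nnz_general A
end

section
/- For every nonzero m×m matrix A over F₂: rank(A)·drow(A) ≤ |A| and rank(A)·dcol(A) ≤ |A|; in particular rank(A)·min(drow(A), dcol(A)) ≤ |A|. -/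
set_option linter.unusedSectionVars false

open Finset Matrix

/-! Each nonzero row of `A` is a nonzero codeword of `Crow A`, so it has weight at least `drow A`,
and there are at least `rank A` nonzero rows; summing row weights gives `rank A * drow A ≤ |A|`.
The column statement is the row statement for `Aᵀ`. -/

section

variable {ι : Type} [Fintype ι] [DecidableEq ι]

theorem nnz_eq_sum_hwt (A : Matrix ι ι F2) : nnz A = ∑ i, hwt (A i) := by
  simp only [nnz, hwt, card_filter]
  exact Fintype.sum_prod_type _

theorem nnz_transpose (A : Matrix ι ι F2) : nnz Aᵀ = nnz A :=
  card_equiv (Equiv.prodComm ι ι) fun p => by rw [mem_filter, mem_filter]; simp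

theorem drow_le_hwt {A : Matrix ι ι F2} {v : ι → F2} (hv : v ∈ Crow A) (hv0 : v ≠ 0) :
    drow A ≤ hwt v :=
  Nat.sInf_le ⟨v, hv, hv0, rfl⟩

theorem dcol_eq_drow_transpose (A : Matrix ι ι F2) : dcol A = drow Aᵀ := rfl

theorem rank_mul_drow_le_nnz (A : Matrix ι ι F2) : A.rank * drow A ≤ nnz A := by
  calc A.rank * drow A ≤ #{i | A.row i ≠ 0} * drow A :=
        Nat.mul_le_mul_right _ (A.rank_le_card_of_support_subset _ fun i hi => by simpa using hi)
    _ = ∑ i with A.row i ≠ 0, drow A := by rw [sum_const, smul_eq_mul]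
    _ ≤ ∑ i with A.row i ≠ 0, hwt (A i) :=
        sum_le_sum fun i hi => drow_le_hwt (Submodule.subset_span ⟨i, rfl⟩) (mem_filter.mp hi).2
    _ ≤ ∑ i, hwt (A i) := sum_le_sum_of_subset (filter_subset _ _)
    _ = nnz A := (nnz_eq_sum_hwt A).symm

theorem rank_mul_dcol_le_nnz (A : Matrix ι ι F2) : A.rank * dcol A ≤ nnz A := by
  simpa [dcol_eq_drow_transpose, nnz_transpose] using rank_mul_drow_le_nnz Aᵀ

end

theorem rank_mul_dist_le_nnz_general {m : ℕ} (A : Matrix (Fin m) (Fin m) F2) :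
    A.rank * drow A ≤ nnz A ∧ A.rank * dcol A ≤ nnz A ∧
    A.rank * min (drow A) (dcol A) ≤ nnz A := by
  have hrow := rank_mul_drow_le_nnz A
  exact ⟨hrow, rank_mul_dcol_le_nnz A,
    (Nat.mul_le_mul_left _ (min_le_left _ _)).trans hrow⟩

/-- For every nonzero binary matrix `A`: `rank(A) · drow(A) ≤ |A|`,
`rank(A) · dcol(A) ≤ |A|`, and consequently `rank(A) · min(drow(A), dcol(A)) ≤ |A|`. -/
theorem rank_mul_dist_le_nnz {m : ℕ} (A : Matrix (Fin m) (Fin m) F2) (hA : A ≠ 0) :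
    A.rank * drow A ≤ nnz A ∧ A.rank * dcol A ≤ nnz A ∧
    A.rank * min (drow A) (dcol A) ≤ nnz A :=
  rank_mul_dist_le_nnz_general A
end

section
/- Fix m ≥ 1, 0 ≤ k ≤ m and a nonzero vector x ∈ F₂^m. Then (2^k − 1)·|{A : m×m matrix over F₂ with rank(A) = k}| = (2^m − 1)·|{A : m×m matrix over F₂ with rank(A) = k and x ∈ Ccol(A)}|. -/
set_option linter.unusedSectionVars false

open Finset Matrix

/-! Double count the pairs `(A, y)` with `rank A = k` and `0 ≠ y ∈ Ccol A`. Each such `A`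
contributes `2 ^ k - 1` vectors `y`. Left multiplication by an invertible matrix preserves rank
and moves column spaces along, and invertible matrices act transitively on nonzero vectors, so
every nonzero `y` lies in the column space of equally many rank-`k` matrices. -/

theorem exists_linearEquiv_apply_eq {K V : Type*} [Field K] [AddCommGroup V] [Module K V]
    {x y : V} (hx : x ≠ 0) (hy : y ≠ 0) : ∃ g : V ≃ₗ[K] V, g x = y := by
  obtain ⟨g, hg⟩ := Submodule.exists_linearEquiv_restrict_eq
    (LinearEquiv.coord K V x hx ≪≫ₗ LinearEquiv.toSpanNonzeroSingleton K V y hy)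
  refine ⟨g, ?_⟩
  have := hg ⟨x, Submodule.mem_span_singleton_self x⟩
  simpa [LinearEquiv.coord_self] using this.symm

theorem Submodule.natCard_mem_and_ne_zero {K V : Type*} [Field K] [Finite K] [AddCommGroup V]
    [Module K V] [Finite V] (W : Submodule K V) :
    Nat.card {v : V // v ∈ W ∧ v ≠ 0} = Nat.card K ^ Module.finrank K W - 1 := by
  classical
  have := Fintype.ofFinite V
  rw [← Module.natCard_eq_pow_finrank,
    ← Nat.card_congr (Equiv.subtypeSubtypeEquivSubtypeInter _ _), Nat.card_eq_fintype_card,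
    Fintype.card_subtype_compl]
  simp only [ZeroMemClass.coe_eq_zero, Fintype.card_subtype_eq, Nat.card_eq_fintype_card]

namespace Matrix

variable {K ι κ : Type*} [Field K] [Fintype ι] [Fintype κ]

theorem natCard_rank_eq_and_mem_range_eq {k : ℕ} {x y : ι → K} (hx : x ≠ 0) (hy : y ≠ 0) :
    Nat.card {A : Matrix ι κ K // A.rank = k ∧ x ∈ LinearMap.range A.mulVecLin} =
      Nat.card {A : Matrix ι κ K // A.rank = k ∧ y ∈ LinearMap.range A.mulVecLin} := by
  classical
  obtain ⟨g, rfl⟩ := exists_linearEquiv_apply_eq (K := K) hx hy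
  let e : Matrix ι κ K ≃ Matrix ι κ K :=
    (toLin'.trans ((LinearEquiv.congrRight g).trans toLin'.symm)).toEquiv
  have he (A : Matrix ι κ K) : (e A).mulVecLin = g.toLinearMap ∘ₗ A.mulVecLin := by
    rw [← toLin'_apply', LinearEquiv.coe_toEquiv, LinearEquiv.trans_apply,
      LinearEquiv.trans_apply, LinearEquiv.apply_symm_apply]
    rfl
  refine Nat.card_congr (e.subtypeEquiv fun A => ?_)
  rw [rank, rank, he, LinearMap.range_comp, LinearEquiv.finrank_map_eq,
    Submodule.mem_map_equiv, LinearEquiv.symm_apply_apply]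

theorem pow_sub_one_mul_natCard_rank_eq [Finite K] (k : ℕ) {x : ι → K} (hx : x ≠ 0) :
    (Nat.card K ^ k - 1) * Nat.card {A : Matrix ι κ K // A.rank = k} =
      (Nat.card K ^ Fintype.card ι - 1) *
        Nat.card {A : Matrix ι κ K // A.rank = k ∧ x ∈ LinearMap.range A.mulVecLin} := by
  classical
  have := Fintype.ofFinite K
  have hcard := Finset.card_mul_eq_card_mul (fun A y => y ∈ LinearMap.range A.mulVecLin)
    (s := {A : Matrix ι κ K | A.rank = k}) (t := {y : ι → K | y ≠ 0})
    (m := Nat.card K ^ k - 1)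
    (n := Nat.card {A : Matrix ι κ K // A.rank = k ∧ x ∈ LinearMap.range A.mulVecLin}) ?_ ?_
  · rw [Finset.filter_ne', Finset.card_erase_of_mem (Finset.mem_univ 0), Finset.card_univ,
      Fintype.card_fun, ← Nat.card_eq_fintype_card (α := K), ← Fintype.card_subtype,
      ← Nat.card_eq_fintype_card] at hcard
    rw [mul_comm, hcard]
  · intro A hA
    rw [Finset.bipartiteAbove, Finset.filter_filter, ← Fintype.card_subtype,
      ← Nat.card_eq_fintype_card, Nat.card_congr (Equiv.subtypeEquivRight fun _ => and_comm),
      Submodule.natCard_mem_and_ne_zero]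
    exact congrArg (Nat.card K ^ · - 1) (Finset.mem_filter.mp hA).2
  · intro y hy
    rw [Finset.bipartiteBelow, Finset.filter_filter, ← Fintype.card_subtype,
      ← Nat.card_eq_fintype_card]
    exact natCard_rank_eq_and_mem_range_eq (Finset.mem_filter.mp hy).2 hx

end Matrix

theorem count_matrices_identity_general (m k : ℕ) (x : Fin m → F2) (hx : x ≠ 0) :
    (2 ^ k - 1) * Nat.card {A : Matrix (Fin m) (Fin m) F2 // A.rank = k} =
    (2 ^ m - 1) * Nat.card {A : Matrix (Fin m) (Fin m) F2 // A.rank = k ∧ x ∈ Ccol A} := by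
  have hCcol (A : Matrix (Fin m) (Fin m) F2) : Ccol A = LinearMap.range A.mulVecLin :=
    (range_mulVecLin A).symm
  simpa only [hCcol, Nat.card_zmod, Fintype.card_fin] using
    pow_sub_one_mul_natCard_rank_eq (κ := Fin m) k hx

/-- Counting identity: `(2^k − 1) · |B(m,k)| = (2^m − 1) · W`, where `B(m,k)` is the set
of `m × m` binary matrices of rank `k` and `W` counts those whose column space contains
a fixed nonzero vector `x`. -/
theorem count_matrices_identity (m k : ℕ) (hm : 1 ≤ m) (hk : k ≤ m)
    (x : Fin m → F2) (hx : x ≠ 0) :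
    (2 ^ k - 1) * Nat.card {A : Matrix (Fin m) (Fin m) F2 // A.rank = k} =
    (2 ^ m - 1) * Nat.card {A : Matrix (Fin m) (Fin m) F2 // A.rank = k ∧ x ∈ Ccol A} :=
  count_matrices_identity_general m k x hx
end
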